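/- For all integers c ≥ 0 and i ≥ 0, setting k = c + i, the average-case objective PAR of the bounded-bisection-auction tiling T_{c,i} for the function A_k equals (c+3)/2 − 2^c/2^{k+1} + 1/2^{k+1} − 1/2^{c+1}. -/
import Mathlib


open Finset

/-- The value space `{0,…,2^k−1} × {0,…,2^k−1}`. -/
def Vk (k : ℕ) : Finset (ℕ × ℕ) := Finset.range (2 ^ k) ×ˢ Finset.range (2 ^ k)

/-- A tiling of `Vk k`: a finite collection of nonempty rectangles partitioning `Vk k`. -/
def IsTiling (k : ℕ) (T : Finset (Finset (ℕ × ℕ))) : Prop :=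
  (∀ R ∈ T, ∃ S S' : Finset ℕ, R = S ×ˢ S') ∧
    (∀ R ∈ T, R.Nonempty) ∧ (∀ R ∈ T, R ⊆ Vk k) ∧ ∀ x ∈ Vk k, ∃! R, R ∈ T ∧ x ∈ R

/-- `f`-monochromaticity of a tiling. -/
def Mono {β : Type} (f : ℕ × ℕ → β) (T : Finset (Finset (ℕ × ℕ))) : Prop :=
  ∀ R ∈ T, ∀ x ∈ R, ∀ y ∈ R, f x = f y

/-- The tile of `T` containing `x` (union of all tiles containing `x`; for a
tiling this is exactly the unique tile containing `x`). -/
def tileOf (T : Finset (Finset (ℕ × ℕ))) (x : ℕ × ℕ) : Finset (ℕ × ℕ) :=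
  (T.filter fun R => x ∈ R).sup id

/-- The ideal region of `x`: the level set of `f x` inside `Vk k`. -/
def ideal {β : Type} [DecidableEq β] (k : ℕ) (f : ℕ × ℕ → β) (x : ℕ × ℕ) : Finset (ℕ × ℕ) :=
  (Vk k).filter fun y => f y = f x

/-- Average-case objective PAR of a tiling w.r.t. the uniform distribution. -/
def avgObjPAR {β : Type} [DecidableEq β] (k : ℕ) (f : ℕ × ℕ → β)
    (T : Finset (Finset (ℕ × ℕ))) : ℚ :=
  (∑ x ∈ Vk k, ((ideal k f x).card : ℚ) / ((tileOf T x).card : ℚ)) / 2 ^ (2 * k)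

/-- Average-case PAR with respect to party 1. -/
def avgPAR1 {β : Type} [DecidableEq β] (k : ℕ) (f : ℕ × ℕ → β)
    (T : Finset (Finset (ℕ × ℕ))) : ℚ :=
  (∑ x ∈ Vk k,
      (((Finset.range (2 ^ k)).filter fun y => f (x.1, y) = f x).card : ℚ) /
        (((Finset.range (2 ^ k)).filter fun y => (x.1, y) ∈ tileOf T x).card : ℚ)) /
    2 ^ (2 * k)

/-- Average-case PAR with respect to party 2. -/
def avgPAR2 {β : Type} [DecidableEq β] (k : ℕ) (f : ℕ × ℕ → β)
    (T : Finset (Finset (ℕ × ℕ))) : ℚ :=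
  (∑ x ∈ Vk k,
      (((Finset.range (2 ^ k)).filter fun y => f (y, x.2) = f x).card : ℚ) /
        (((Finset.range (2 ^ k)).filter fun y => (y, x.2) ∈ tileOf T x).card : ℚ)) /
    2 ^ (2 * k)

/-- The millionaires function: `1` if `x1 ≥ x2`, else `2`. -/
def Mil (x : ℕ × ℕ) : ℕ := if x.2 ≤ x.1 then 1 else 2

/-- The second-price auction function. -/
def Auc (x : ℕ × ℕ) : ℕ × ℕ := if x.2 ≤ x.1 then (1, x.2) else (2, x.1)

/-- Translate a tile by `(a, a)`. -/
def shiftTile (a : ℕ) (R : Finset (ℕ × ℕ)) : Finset (ℕ × ℕ) :=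
  R.image fun p => (p.1 + a, p.2 + a)

/-- The bisection-protocol tiling `B_k`. -/
def Btile : ℕ → Finset (Finset (ℕ × ℕ))
  | 0 => {{(0, 0)}}
  | j + 1 =>
    Btile j ∪ (Btile j).image (shiftTile (2 ^ j)) ∪
      {Finset.range (2 ^ j) ×ˢ Finset.Ico (2 ^ j) (2 ^ (j + 1)),
        Finset.Ico (2 ^ j) (2 ^ (j + 1)) ×ˢ Finset.range (2 ^ j)}

/-- The bounded-bisection-auction tiling `T_{c,i}`. -/
def BBA : ℕ → ℕ → Finset (Finset (ℕ × ℕ))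
  | 0, i =>
    (Finset.range (2 ^ i)).image (fun p => Finset.Ico p (2 ^ i) ×ˢ ({p} : Finset ℕ)) ∪
      (Finset.range (2 ^ i - 1)).image fun p => ({p} : Finset ℕ) ×ˢ Finset.Ico (p + 1) (2 ^ i)
  | c + 1, i =>
    BBA c i ∪ (BBA c i).image (shiftTile (2 ^ (c + i))) ∪
      (Finset.range (2 ^ (c + i))).image
        (fun j => Finset.Ico (2 ^ (c + i)) (2 ^ (c + i + 1)) ×ˢ ({j} : Finset ℕ)) ∪
      (Finset.range (2 ^ (c + i))).image fun j =>
        ({j} : Finset ℕ) ×ˢ Finset.Ico (2 ^ (c + i)) (2 ^ (c + i + 1))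

/-- The public-good function: `true` iff `x1 + x2 ≥ 2^k − 1` ("Build"). -/
def PG (k : ℕ) (x : ℕ × ℕ) : Bool := decide (2 ^ k - 1 ≤ x.1 + x.2)

/-- The truthful public-good function: `none` = "Do Not Build". -/
def TPG (c : ℕ) (x : ℕ × ℕ) : Option (ℕ × ℕ) :=
  if x.1 + x.2 < c then none else some (c - x.2, c - x.1)

/-- The tiling of `Vk k` into singleton cells (sealed-bid auction). -/
def sealedTiling (k : ℕ) : Finset (Finset (ℕ × ℕ)) :=
  (Vk k).image fun x => ({x} : Finset (ℕ × ℕ))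

/-! ### Auxiliary lemmas -/

lemma mem_Vk {k : ℕ} {x : ℕ × ℕ} : x ∈ Vk k ↔ x.1 < 2 ^ k ∧ x.2 < 2 ^ k := by
  simp [Vk, Finset.mem_product]

lemma card_Vk (k : ℕ) : (Vk k).card = 2 ^ k * 2 ^ k := by
  simp [Vk]

lemma mem_shiftTile {a : ℕ} {R : Finset (ℕ × ℕ)} {x : ℕ × ℕ} :
    x ∈ shiftTile a R ↔ ∃ p ∈ R, x.1 = p.1 + a ∧ x.2 = p.2 + a := by
  constructor
  · intro h
    simp only [shiftTile, Finset.mem_image] at h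
    obtain ⟨p, hp, heq⟩ := h
    exact ⟨p, hp, by rw [← heq], by rw [← heq]⟩
  · rintro ⟨p, hp, h1, h2⟩
    simp only [shiftTile, Finset.mem_image]
    exact ⟨p, hp, Prod.ext h1.symm h2.symm⟩

lemma card_shiftTile (a : ℕ) (R : Finset (ℕ × ℕ)) : (shiftTile a R).card = R.card := by
  apply Finset.card_image_of_injective
  intro p q h
  have h1 := congrArg Prod.fst h
  have h2 := congrArg Prod.snd h
  simp only at h1 h2
  exact Prod.ext (by omega) (by omega)

lemma tileOf_eq {T : Finset (Finset (ℕ × ℕ))} {R : Finset (ℕ × ℕ)} {x : ℕ × ℕ}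
    (hR : R ∈ T) (hx : x ∈ R) (hu : ∀ R' ∈ T, x ∈ R' → R' = R) : tileOf T x = R := by
  unfold tileOf
  have hfilter : T.filter (fun R => x ∈ R) = {R} := by
    ext R'
    simp only [Finset.mem_filter, Finset.mem_singleton]
    constructor
    · rintro ⟨h1, h2⟩; exact hu R' h1 h2
    · rintro rfl; exact ⟨hR, hx⟩
  rw [hfilter, Finset.sup_singleton]
  rfl

lemma mem_BBA_zero {i : ℕ} {R : Finset (ℕ × ℕ)} :
    R ∈ BBA 0 i ↔ (∃ p < 2 ^ i, R = Finset.Ico p (2 ^ i) ×ˢ ({p} : Finset ℕ)) ∨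
      ∃ p < 2 ^ i - 1, R = ({p} : Finset ℕ) ×ˢ Finset.Ico (p + 1) (2 ^ i) := by
  simp only [BBA, Finset.mem_union, Finset.mem_image, Finset.mem_range]
  constructor
  · rintro (⟨p, hp, rfl⟩ | ⟨p, hp, rfl⟩)
    · exact Or.inl ⟨p, hp, rfl⟩
    · exact Or.inr ⟨p, hp, rfl⟩
  · rintro (⟨p, hp, rfl⟩ | ⟨p, hp, rfl⟩)
    · exact Or.inl ⟨p, hp, rfl⟩
    · exact Or.inr ⟨p, hp, rfl⟩

lemma mem_BBA_succ {c i : ℕ} {R : Finset (ℕ × ℕ)} :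
    R ∈ BBA (c + 1) i ↔ R ∈ BBA c i ∨
      (∃ R' ∈ BBA c i, R = shiftTile (2 ^ (c + i)) R') ∨
      (∃ j < 2 ^ (c + i), R = Finset.Ico (2 ^ (c + i)) (2 ^ (c + i + 1)) ×ˢ ({j} : Finset ℕ)) ∨
      ∃ j < 2 ^ (c + i), R = ({j} : Finset ℕ) ×ˢ Finset.Ico (2 ^ (c + i)) (2 ^ (c + i + 1)) := by
  simp only [BBA, Finset.mem_union, Finset.mem_image, Finset.mem_range]
  constructor
  · rintro (((h | ⟨R', hR', rfl⟩) | ⟨j, hj, rfl⟩) | ⟨j, hj, rfl⟩)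
    · exact Or.inl h
    · exact Or.inr (Or.inl ⟨R', hR', rfl⟩)
    · exact Or.inr (Or.inr (Or.inl ⟨j, hj, rfl⟩))
    · exact Or.inr (Or.inr (Or.inr ⟨j, hj, rfl⟩))
  · rintro (h | ⟨R', hR', rfl⟩ | ⟨j, hj, rfl⟩ | ⟨j, hj, rfl⟩)
    · exact Or.inl (Or.inl (Or.inl h))
    · exact Or.inl (Or.inl (Or.inr ⟨R', hR', rfl⟩))
    · exact Or.inl (Or.inr ⟨j, hj, rfl⟩)
    · exact Or.inr ⟨j, hj, rfl⟩

lemma BBA_subset : ∀ c i : ℕ, ∀ R ∈ BBA c i, R ⊆ Vk (c + i) := by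
  intro c
  induction c with
  | zero =>
    intro i R hR x hx
    rw [mem_BBA_zero] at hR
    rw [mem_Vk]
    rcases hR with ⟨p, hp, rfl⟩ | ⟨p, hp, rfl⟩ <;>
      simp only [Finset.mem_product, Finset.mem_Ico, Finset.mem_singleton] at hx <;>
      simp only [Nat.zero_add] <;> omega
  | succ c ih =>
    intro i R hR x hx
    have hpow : (2 : ℕ) ^ (c + 1 + i) = 2 ^ (c + i) * 2 := by
      rw [show c + 1 + i = (c + i) + 1 by omega, pow_succ]
    rw [mem_BBA_succ] at hR
    rw [mem_Vk]
    rcases hR with h | ⟨R', hR', rfl⟩ | ⟨j, hj, rfl⟩ | ⟨j, hj, rfl⟩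
    · have := mem_Vk.mp (ih i R h hx)
      omega
    · rw [mem_shiftTile] at hx
      obtain ⟨p, hp, h1, h2⟩ := hx
      have := mem_Vk.mp (ih i R' hR' hp)
      omega
    · simp only [Finset.mem_product, Finset.mem_Ico, Finset.mem_singleton] at hx
      have : (2 : ℕ) ^ (c + i + 1) = 2 ^ (c + i) * 2 := pow_succ 2 (c + i)
      omega
    · simp only [Finset.mem_product, Finset.mem_Ico, Finset.mem_singleton] at hx
      have : (2 : ℕ) ^ (c + i + 1) = 2 ^ (c + i) * 2 := pow_succ 2 (c + i)
      omega
/-! ### Classification of tiles containing a point -/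

lemma mem_BBA_succ_ll {c i : ℕ} {x : ℕ × ℕ} {R : Finset (ℕ × ℕ)}
    (h1 : x.1 < 2 ^ (c + i)) (h2 : x.2 < 2 ^ (c + i))
    (hR : R ∈ BBA (c + 1) i) (hx : x ∈ R) : R ∈ BBA c i := by
  rw [mem_BBA_succ] at hR
  rcases hR with h | ⟨R', hR', rfl⟩ | ⟨j, hj, rfl⟩ | ⟨j, hj, rfl⟩
  · exact h
  · rw [mem_shiftTile] at hx; obtain ⟨p, hp, hp1, hp2⟩ := hx; omega
  · simp only [Finset.mem_product, Finset.mem_Ico, Finset.mem_singleton] at hx; omega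
  · simp only [Finset.mem_product, Finset.mem_Ico, Finset.mem_singleton] at hx; omega

lemma mem_BBA_succ_tr {c i : ℕ} {x : ℕ × ℕ} {R : Finset (ℕ × ℕ)}
    (h1 : 2 ^ (c + i) ≤ x.1) (h2 : 2 ^ (c + i) ≤ x.2)
    (hR : R ∈ BBA (c + 1) i) (hx : x ∈ R) :
    ∃ R₀ ∈ BBA c i, R = shiftTile (2 ^ (c + i)) R₀ ∧
      (x.1 - 2 ^ (c + i), x.2 - 2 ^ (c + i)) ∈ R₀ := by
  rw [mem_BBA_succ] at hR
  rcases hR with h | ⟨R', hR', rfl⟩ | ⟨j, hj, rfl⟩ | ⟨j, hj, rfl⟩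
  · have := mem_Vk.mp (BBA_subset c i R h hx); omega
  · rw [mem_shiftTile] at hx
    obtain ⟨p, hp, hp1, hp2⟩ := hx
    refine ⟨R', hR', rfl, ?_⟩
    have : (x.1 - 2 ^ (c + i), x.2 - 2 ^ (c + i)) = p := Prod.ext (by omega) (by omega)
    rw [this]; exact hp
  · simp only [Finset.mem_product, Finset.mem_Ico, Finset.mem_singleton] at hx; omega
  · simp only [Finset.mem_product, Finset.mem_Ico, Finset.mem_singleton] at hx; omega

lemma mem_BBA_succ_row {c i : ℕ} {x : ℕ × ℕ} {R : Finset (ℕ × ℕ)}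
    (h1 : 2 ^ (c + i) ≤ x.1) (h2 : x.2 < 2 ^ (c + i))
    (hR : R ∈ BBA (c + 1) i) (hx : x ∈ R) :
    R = Finset.Ico (2 ^ (c + i)) (2 ^ (c + i + 1)) ×ˢ ({x.2} : Finset ℕ) := by
  rw [mem_BBA_succ] at hR
  rcases hR with h | ⟨R', hR', rfl⟩ | ⟨j, hj, rfl⟩ | ⟨j, hj, rfl⟩
  · have := mem_Vk.mp (BBA_subset c i R h hx); omega
  · rw [mem_shiftTile] at hx; obtain ⟨p, hp, hp1, hp2⟩ := hx; omega
  · simp only [Finset.mem_product, Finset.mem_Ico, Finset.mem_singleton] at hx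
    rw [hx.2]
  · simp only [Finset.mem_product, Finset.mem_Ico, Finset.mem_singleton] at hx; omega

lemma mem_BBA_succ_col {c i : ℕ} {x : ℕ × ℕ} {R : Finset (ℕ × ℕ)}
    (h1 : x.1 < 2 ^ (c + i)) (h2 : 2 ^ (c + i) ≤ x.2)
    (hR : R ∈ BBA (c + 1) i) (hx : x ∈ R) :
    R = ({x.1} : Finset ℕ) ×ˢ Finset.Ico (2 ^ (c + i)) (2 ^ (c + i + 1)) := by
  rw [mem_BBA_succ] at hR
  rcases hR with h | ⟨R', hR', rfl⟩ | ⟨j, hj, rfl⟩ | ⟨j, hj, rfl⟩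
  · have := mem_Vk.mp (BBA_subset c i R h hx); omega
  · rw [mem_shiftTile] at hx; obtain ⟨p, hp, hp1, hp2⟩ := hx; omega
  · simp only [Finset.mem_product, Finset.mem_Ico, Finset.mem_singleton] at hx; omega
  · simp only [Finset.mem_product, Finset.mem_Ico, Finset.mem_singleton] at hx
    rw [hx.1]

lemma BBA_mono {c i : ℕ} : BBA c i ⊆ BBA (c + 1) i := fun R hR =>
  mem_BBA_succ.mpr (Or.inl hR)

/-! ### The ideal regions of the auction function -/

lemma ideal_eq_le {k : ℕ} {x : ℕ × ℕ} (hx1 : x.1 < 2 ^ k) (hx2 : x.2 < 2 ^ k)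
    (h : x.2 ≤ x.1) : ideal k Auc x = Finset.Ico x.2 (2 ^ k) ×ˢ ({x.2} : Finset ℕ) := by
  ext y
  simp only [ideal, Auc, Finset.mem_filter, mem_Vk, Finset.mem_product, Finset.mem_Ico,
    Finset.mem_singleton, if_pos h, Prod.ext_iff]
  split_ifs with hy <;> simp only [Prod.ext_iff, true_and, false_and] <;> omega

lemma ideal_eq_gt {k : ℕ} {x : ℕ × ℕ} (hx1 : x.1 < 2 ^ k) (hx2 : x.2 < 2 ^ k)
    (h : x.1 < x.2) : ideal k Auc x = ({x.1} : Finset ℕ) ×ˢ Finset.Ico (x.1 + 1) (2 ^ k) := by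
  ext y
  simp only [ideal, Auc, Finset.mem_filter, mem_Vk, Finset.mem_product, Finset.mem_Ico,
    Finset.mem_singleton, if_neg (by omega : ¬ x.2 ≤ x.1), Prod.ext_iff]
  split_ifs with hy <;> simp only [Prod.ext_iff, true_and, false_and] <;> omega

lemma ideal_card_le {k : ℕ} {x : ℕ × ℕ} (hx1 : x.1 < 2 ^ k) (hx2 : x.2 < 2 ^ k)
    (h : x.2 ≤ x.1) : (ideal k Auc x).card = 2 ^ k - x.2 := by
  rw [ideal_eq_le hx1 hx2 h, Finset.card_product, Nat.card_Ico, Finset.card_singleton, mul_one]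

lemma ideal_card_gt {k : ℕ} {x : ℕ × ℕ} (hx1 : x.1 < 2 ^ k) (hx2 : x.2 < 2 ^ k)
    (h : x.1 < x.2) : (ideal k Auc x).card = 2 ^ k - 1 - x.1 := by
  rw [ideal_eq_gt hx1 hx2 h, Finset.card_product, Nat.card_Ico, Finset.card_singleton, one_mul]
  omega
/-! ### Unique tile containing each point -/

lemma spec0 {i : ℕ} {x : ℕ × ℕ} (hx : x ∈ Vk i) :
    ideal i Auc x ∈ BBA 0 i ∧ x ∈ ideal i Auc x ∧
      ∀ R' ∈ BBA 0 i, x ∈ R' → R' = ideal i Auc x := by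
  rw [mem_Vk] at hx
  obtain ⟨hx1, hx2⟩ := hx
  refine ⟨?_, ?_, ?_⟩
  · rcases le_or_gt x.2 x.1 with h | h
    · rw [ideal_eq_le hx1 hx2 h, mem_BBA_zero]
      exact Or.inl ⟨x.2, by omega, rfl⟩
    · rw [ideal_eq_gt hx1 hx2 h, mem_BBA_zero]
      exact Or.inr ⟨x.1, by omega, rfl⟩
  · simp only [ideal, Finset.mem_filter, mem_Vk]
    exact ⟨⟨hx1, hx2⟩, trivial⟩
  · intro R' hR' hxR'
    rw [mem_BBA_zero] at hR'
    rcases hR' with ⟨p, hp, rfl⟩ | ⟨p, hp, rfl⟩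
    · simp only [Finset.mem_product, Finset.mem_Ico, Finset.mem_singleton] at hxR'
      rw [ideal_eq_le hx1 hx2 (by omega), hxR'.2]
    · simp only [Finset.mem_product, Finset.mem_Ico, Finset.mem_singleton] at hxR'
      rw [ideal_eq_gt hx1 hx2 (by omega), hxR'.1]

lemma tile_spec : ∀ c i : ℕ, ∀ x ∈ Vk (c + i),
    ∃ R ∈ BBA c i, x ∈ R ∧ ∀ R' ∈ BBA c i, x ∈ R' → R' = R := by
  intro c
  induction c with
  | zero =>
    intro i x hx
    rw [Nat.zero_add] at hx
    obtain ⟨h1, h2, h3⟩ := spec0 hx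
    exact ⟨ideal i Auc x, h1, h2, h3⟩
  | succ c ih =>
    intro i x hx
    rw [mem_Vk] at hx
    have hpow : (2 : ℕ) ^ (c + 1 + i) = 2 ^ (c + i) * 2 := by
      rw [show c + 1 + i = (c + i) + 1 by omega, pow_succ]
    have hpow' : (2 : ℕ) ^ (c + i + 1) = 2 ^ (c + i) * 2 := pow_succ 2 (c + i)
    rcases lt_or_ge x.1 (2 ^ (c + i)) with hx1 | hx1 <;>
      rcases lt_or_ge x.2 (2 ^ (c + i)) with hx2 | hx2
    · -- lower-left quadrant
      obtain ⟨R, hR, hxR, hu⟩ := ih i x (mem_Vk.mpr ⟨hx1, hx2⟩)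
      exact ⟨R, BBA_mono hR, hxR,
        fun R' hR' hx' => hu R' (mem_BBA_succ_ll hx1 hx2 hR' hx') hx'⟩
    · -- column region
      refine ⟨({x.1} : Finset ℕ) ×ˢ Finset.Ico (2 ^ (c + i)) (2 ^ (c + i + 1)), ?_, ?_, ?_⟩
      · exact mem_BBA_succ.mpr (Or.inr (Or.inr (Or.inr ⟨x.1, hx1, rfl⟩)))
      · simp only [Finset.mem_product, Finset.mem_Ico, Finset.mem_singleton, and_true, true_and]
        omega
      · exact fun R' hR' hx' => mem_BBA_succ_col hx1 hx2 hR' hx'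
    · -- row region
      refine ⟨Finset.Ico (2 ^ (c + i)) (2 ^ (c + i + 1)) ×ˢ ({x.2} : Finset ℕ), ?_, ?_, ?_⟩
      · exact mem_BBA_succ.mpr (Or.inr (Or.inr (Or.inl ⟨x.2, hx2, rfl⟩)))
      · simp only [Finset.mem_product, Finset.mem_Ico, Finset.mem_singleton, and_true, true_and]
        omega
      · exact fun R' hR' hx' => mem_BBA_succ_row hx1 hx2 hR' hx'
    · -- top-right quadrant
      obtain ⟨R, hR, hxR, hu⟩ :=
        ih i (x.1 - 2 ^ (c + i), x.2 - 2 ^ (c + i)) (mem_Vk.mpr ⟨by omega, by omega⟩)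
      refine ⟨shiftTile (2 ^ (c + i)) R, ?_, ?_, ?_⟩
      · exact mem_BBA_succ.mpr (Or.inr (Or.inl ⟨R, hR, rfl⟩))
      · exact mem_shiftTile.mpr ⟨_, hxR, by omega, by omega⟩
      · intro R' hR' hx'
        obtain ⟨R₀, hR₀, rfl, hmem⟩ := mem_BBA_succ_tr hx1 hx2 hR' hx'
        rw [hu R₀ hR₀ hmem]

/-! ### The tile of each point, by region -/

lemma tileOf_ll {c i : ℕ} {x : ℕ × ℕ} (h1 : x.1 < 2 ^ (c + i)) (h2 : x.2 < 2 ^ (c + i)) :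
    tileOf (BBA (c + 1) i) x = tileOf (BBA c i) x := by
  obtain ⟨R, hR, hxR, hu⟩ := tile_spec c i x (mem_Vk.mpr ⟨h1, h2⟩)
  rw [tileOf_eq (BBA_mono hR) hxR
      (fun R' hR' hx' => hu R' (mem_BBA_succ_ll h1 h2 hR' hx') hx'),
    tileOf_eq hR hxR hu]

lemma tileOf_tr {c i : ℕ} {p : ℕ × ℕ} (hp : p ∈ Vk (c + i)) :
    tileOf (BBA (c + 1) i) (2 ^ (c + i) + p.1, 2 ^ (c + i) + p.2) =
      shiftTile (2 ^ (c + i)) (tileOf (BBA c i) p) := by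
  obtain ⟨R, hR, hxR, hu⟩ := tile_spec c i p hp
  rw [tileOf_eq hR hxR hu]
  refine tileOf_eq (mem_BBA_succ.mpr (Or.inr (Or.inl ⟨R, hR, rfl⟩)))
    (mem_shiftTile.mpr ⟨p, hxR, by omega, by omega⟩) ?_
  intro R' hR' hx'
  obtain ⟨R₀, hR₀, rfl, hmem⟩ := mem_BBA_succ_tr (by simp) (by simp) hR' hx'
  have hpt : ((2 ^ (c + i) + p.1, 2 ^ (c + i) + p.2) : ℕ × ℕ).1 - 2 ^ (c + i) = p.1 := by
    simp
  have heq : (((2 ^ (c + i) + p.1, 2 ^ (c + i) + p.2) : ℕ × ℕ).1 - 2 ^ (c + i),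
      ((2 ^ (c + i) + p.1, 2 ^ (c + i) + p.2) : ℕ × ℕ).2 - 2 ^ (c + i)) = p :=
    Prod.ext (by simp) (by simp)
  rw [heq] at hmem
  rw [hu R₀ hR₀ hmem]

lemma tileOf_row {c i : ℕ} {x : ℕ × ℕ} (h1 : 2 ^ (c + i) ≤ x.1) (h1' : x.1 < 2 ^ (c + i + 1))
    (h2 : x.2 < 2 ^ (c + i)) :
    tileOf (BBA (c + 1) i) x = Finset.Ico (2 ^ (c + i)) (2 ^ (c + i + 1)) ×ˢ ({x.2} : Finset ℕ) := by
  refine tileOf_eq (mem_BBA_succ.mpr (Or.inr (Or.inr (Or.inl ⟨x.2, h2, rfl⟩)))) ?_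
    (fun R' hR' hx' => mem_BBA_succ_row h1 h2 hR' hx')
  simp only [Finset.mem_product, Finset.mem_Ico, Finset.mem_singleton, and_true, true_and]
  omega

lemma tileOf_col {c i : ℕ} {x : ℕ × ℕ} (h1 : x.1 < 2 ^ (c + i)) (h2 : 2 ^ (c + i) ≤ x.2)
    (h2' : x.2 < 2 ^ (c + i + 1)) :
    tileOf (BBA (c + 1) i) x = ({x.1} : Finset ℕ) ×ˢ Finset.Ico (2 ^ (c + i)) (2 ^ (c + i + 1)) := by
  refine tileOf_eq (mem_BBA_succ.mpr (Or.inr (Or.inr (Or.inr ⟨x.1, h1, rfl⟩)))) ?_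
    (fun R' hR' hx' => mem_BBA_succ_col h1 h2 hR' hx')
  simp only [Finset.mem_product, Finset.mem_Ico, Finset.mem_singleton, and_true, true_and]
  omega

lemma tileOf_zero {i : ℕ} {x : ℕ × ℕ} (hx : x ∈ Vk i) :
    tileOf (BBA 0 i) x = ideal i Auc x := by
  obtain ⟨h1, h2, h3⟩ := spec0 hx
  exact tileOf_eq h1 h2 h3
/-! ### Summation over a tiling, tile by tile -/

lemma sum_tiles {k : ℕ} {T : Finset (Finset (ℕ × ℕ))}
    (hsub : ∀ R ∈ T, R ⊆ Vk k)
    (hspec : ∀ x ∈ Vk k, ∃ R ∈ T, x ∈ R ∧ ∀ R' ∈ T, x ∈ R' → R' = R)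
    (g : Finset (ℕ × ℕ) → ℚ) :
    ∑ x ∈ Vk k, g (tileOf T x) = ∑ R ∈ T, (R.card : ℚ) * g R := by
  have hV : Vk k = T.biUnion id := by
    ext x
    simp only [Finset.mem_biUnion, id]
    constructor
    · intro hx
      obtain ⟨R, hR, hxR, _⟩ := hspec x hx
      exact ⟨R, hR, hxR⟩
    · rintro ⟨R, hR, hxR⟩
      exact hsub R hR hxR
  have hdisj : (↑T : Set (Finset (ℕ × ℕ))).PairwiseDisjoint id := by
    intro R hR R' hR' hne
    simp only [Finset.mem_coe] at hR hR'
    simp only [Function.onFun, id_eq]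
    rw [Finset.disjoint_left]
    intro a haR haR'
    obtain ⟨R₀, hR₀, _, hu⟩ := hspec a (hsub R hR haR)
    exact hne ((hu R hR haR).trans (hu R' hR' haR').symm)
  rw [hV, Finset.sum_biUnion hdisj]
  refine Finset.sum_congr rfl fun R hR => ?_
  simp only [id_eq]
  have hconst : ∀ x ∈ R, g (tileOf T x) = g R := by
    intro x hx
    obtain ⟨R₀, hR₀, hxR₀, hu⟩ := hspec x (hsub R hR hx)
    rw [tileOf_eq hR₀ hxR₀ hu, ← hu R hR hx]
  rw [Finset.sum_congr rfl hconst, Finset.sum_const, nsmul_eq_mul]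

lemma card_BBA_zero (i : ℕ) : (BBA 0 i).card = 2 ^ (i + 1) - 1 := by
  have hA : ((Finset.range (2 ^ i)).image
      (fun p => Finset.Ico p (2 ^ i) ×ˢ ({p} : Finset ℕ))).card = 2 ^ i := by
    rw [Finset.card_image_of_injOn, Finset.card_range]
    intro p hp q hq h
    dsimp only at h
    simp only [Finset.mem_coe, Finset.mem_range] at hp hq
    have : (p, p) ∈ Finset.Ico q (2 ^ i) ×ˢ ({q} : Finset ℕ) := by
      rw [← h]
      simp only [Finset.mem_product, Finset.mem_Ico, Finset.mem_singleton, and_true, true_and]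
      omega
    simp only [Finset.mem_product, Finset.mem_Ico, Finset.mem_singleton] at this
    omega
  have hB : ((Finset.range (2 ^ i - 1)).image
      (fun p => ({p} : Finset ℕ) ×ˢ Finset.Ico (p + 1) (2 ^ i))).card = 2 ^ i - 1 := by
    rw [Finset.card_image_of_injOn, Finset.card_range]
    intro p hp q hq h
    dsimp only at h
    simp only [Finset.mem_coe, Finset.mem_range] at hp hq
    have : (p, p + 1) ∈ ({q} : Finset ℕ) ×ˢ Finset.Ico (q + 1) (2 ^ i) := by
      rw [← h]
      simp only [Finset.mem_product, Finset.mem_Ico, Finset.mem_singleton, and_true, true_and]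
      omega
    simp only [Finset.mem_product, Finset.mem_Ico, Finset.mem_singleton] at this
    omega
  have hdisj : Disjoint ((Finset.range (2 ^ i)).image
      (fun p => Finset.Ico p (2 ^ i) ×ˢ ({p} : Finset ℕ)))
      ((Finset.range (2 ^ i - 1)).image
      (fun p => ({p} : Finset ℕ) ×ˢ Finset.Ico (p + 1) (2 ^ i))) := by
    rw [Finset.disjoint_left]
    rintro R hR hR'
    simp only [Finset.mem_image, Finset.mem_range] at hR hR'
    obtain ⟨p, hp, rfl⟩ := hR
    obtain ⟨q, hq, h⟩ := hR' 
    have : (p, p) ∈ ({q} : Finset ℕ) ×ˢ Finset.Ico (q + 1) (2 ^ i) := by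
      rw [h]
      simp only [Finset.mem_product, Finset.mem_Ico, Finset.mem_singleton, and_true, true_and]
      omega
    simp only [Finset.mem_product, Finset.mem_Ico, Finset.mem_singleton] at this
    omega
  show ((Finset.range (2 ^ i)).image _ ∪ (Finset.range (2 ^ i - 1)).image _).card = _
  rw [Finset.card_union_of_disjoint hdisj, hA, hB]
  have : (2 : ℕ) ^ (i + 1) = 2 ^ i * 2 := pow_succ 2 i
  have : (1 : ℕ) ≤ 2 ^ i := Nat.one_le_two_pow
  omega

lemma BBA_zero_nonempty {i : ℕ} {R : Finset (ℕ × ℕ)} (hR : R ∈ BBA 0 i) : R.Nonempty := by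
  rw [mem_BBA_zero] at hR
  rcases hR with ⟨p, hp, rfl⟩ | ⟨p, hp, rfl⟩
  · exact ⟨(p, p), by simp only [Finset.mem_product, Finset.mem_Ico, Finset.mem_singleton,
      and_true, true_and]; omega⟩
  · exact ⟨(p, p + 1), by simp only [Finset.mem_product, Finset.mem_Ico, Finset.mem_singleton,
      and_true, true_and]; omega⟩

/-! ### Splitting sums over `Vk (k+1)` into quadrants -/

lemma sum_Vk_succ (k : ℕ) (g : ℕ × ℕ → ℚ) :
    ∑ x ∈ Vk (k + 1), g x =
      ∑ x ∈ Vk k, g x + ∑ x ∈ Vk k, g (2 ^ k + x.1, 2 ^ k + x.2) +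
        ∑ x ∈ Vk k, g (2 ^ k + x.1, x.2) + ∑ x ∈ Vk k, g (x.1, 2 ^ k + x.2) := by
  have e : (2 : ℕ) ^ (k + 1) = 2 ^ k + 2 ^ k := by
    rw [pow_succ]; omega
  simp only [Vk, Finset.sum_product, e, Finset.sum_range_add, Finset.sum_add_distrib]
  ring

lemma sum_Vk_fst (k : ℕ) (f : ℕ → ℚ) :
    ∑ x ∈ Vk k, f x.1 = 2 ^ k * ∑ a ∈ Finset.range (2 ^ k), f a := by
  simp only [Vk, Finset.sum_product, Finset.sum_const, Finset.card_range, nsmul_eq_mul,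
    ← Finset.mul_sum]
  push_cast
  ring

lemma sum_Vk_snd (k : ℕ) (f : ℕ → ℚ) :
    ∑ x ∈ Vk k, f x.2 = 2 ^ k * ∑ b ∈ Finset.range (2 ^ k), f b := by
  simp only [Vk, Finset.sum_product, Finset.sum_const, Finset.card_range, nsmul_eq_mul]
  push_cast
  ring

lemma gaussQ (n : ℕ) : ∑ b ∈ Finset.range n, (b : ℚ) = ((n : ℚ) * n - n) / 2 := by
  have h : ((∑ i ∈ Finset.range n, i) * 2 : ℕ) = n * n - n := by
    rw [Finset.sum_range_id_mul_two]
    cases n with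
    | zero => rfl
    | succ m => simp [Nat.succ_sub_one]; ring_nf; omega
  have hle : n ≤ n * n := by
    cases n with
    | zero => simp
    | succ m => exact Nat.le_mul_of_pos_left _ (Nat.succ_pos m)
  have := congrArg (fun m : ℕ => (m : ℚ)) h
  push_cast [Nat.cast_sub hle] at this
  linarith [this]
/-! ### Rational-valued tile-size and ideal-size functions -/

/-- The size of the tile of `x` in `T_{c,i}`, as a rational number. -/
def qtile (c i : ℕ) (x : ℕ × ℕ) : ℚ := ((tileOf (BBA c i) x).card : ℚ)

/-- The size of the ideal region of `x` for `A_k`, as a rational number. -/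
def idc (k : ℕ) (x : ℕ × ℕ) : ℚ := ((ideal k Auc x).card : ℚ)

lemma qtile_zero {i : ℕ} {x : ℕ × ℕ} (hx : x ∈ Vk i) : qtile 0 i x = idc i x := by
  unfold qtile idc
  rw [tileOf_zero hx]

lemma idc_pos {k : ℕ} {x : ℕ × ℕ} (hx : x ∈ Vk k) : idc k x ≠ 0 := by
  unfold idc
  have : x ∈ ideal k Auc x := by
    simp only [ideal, Finset.mem_filter]
    exact ⟨hx, trivial⟩
  have := Finset.card_pos.mpr ⟨x, this⟩
  positivity

lemma qtile_ll {c i : ℕ} {x : ℕ × ℕ} (h1 : x.1 < 2 ^ (c + i)) (h2 : x.2 < 2 ^ (c + i)) :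
    qtile (c + 1) i x = qtile c i x := by
  unfold qtile
  rw [tileOf_ll h1 h2]

lemma qtile_tr {c i : ℕ} {p : ℕ × ℕ} (hp : p ∈ Vk (c + i)) :
    qtile (c + 1) i (2 ^ (c + i) + p.1, 2 ^ (c + i) + p.2) = qtile c i p := by
  unfold qtile
  rw [tileOf_tr hp, card_shiftTile]

lemma qtile_row {c i : ℕ} {x : ℕ × ℕ} (h1 : 2 ^ (c + i) ≤ x.1) (h1' : x.1 < 2 ^ (c + i + 1))
    (h2 : x.2 < 2 ^ (c + i)) : qtile (c + 1) i x = 2 ^ (c + i) := by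
  unfold qtile
  rw [tileOf_row h1 h1' h2, Finset.card_product, Nat.card_Ico, Finset.card_singleton, mul_one]
  have e : (2 : ℕ) ^ (c + i + 1) - 2 ^ (c + i) = 2 ^ (c + i) := by
    have := pow_succ 2 (c + i); omega
  rw [e]
  push_cast
  ring

lemma qtile_col {c i : ℕ} {x : ℕ × ℕ} (h1 : x.1 < 2 ^ (c + i)) (h2 : 2 ^ (c + i) ≤ x.2)
    (h2' : x.2 < 2 ^ (c + i + 1)) : qtile (c + 1) i x = 2 ^ (c + i) := by
  unfold qtile
  rw [tileOf_col h1 h2 h2', Finset.card_product, Nat.card_Ico, Finset.card_singleton, one_mul]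
  have e : (2 : ℕ) ^ (c + i + 1) - 2 ^ (c + i) = 2 ^ (c + i) := by
    have := pow_succ 2 (c + i); omega
  rw [e]
  push_cast
  ring

lemma idc_succ {k : ℕ} {x : ℕ × ℕ} (hx : x ∈ Vk k) : idc (k + 1) x = idc k x + 2 ^ k := by
  rw [mem_Vk] at hx
  have e : (2 : ℕ) ^ (k + 1) = 2 ^ k * 2 := pow_succ 2 k
  have hN : (ideal (k + 1) Auc x).card = (ideal k Auc x).card + 2 ^ k := by
    rcases le_or_gt x.2 x.1 with h | h
    · rw [ideal_card_le (by omega) (by omega) h, ideal_card_le hx.1 hx.2 h]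
      omega
    · rw [ideal_card_gt (by omega) (by omega) h, ideal_card_gt hx.1 hx.2 h]
      omega
  unfold idc
  rw [hN]
  push_cast
  ring

lemma idc_tr {k : ℕ} {p : ℕ × ℕ} (hp : p ∈ Vk k) :
    idc (k + 1) (2 ^ k + p.1, 2 ^ k + p.2) = idc k p := by
  rw [mem_Vk] at hp
  have e : (2 : ℕ) ^ (k + 1) = 2 ^ k * 2 := pow_succ 2 k
  have hN : (ideal (k + 1) Auc (2 ^ k + p.1, 2 ^ k + p.2)).card = (ideal k Auc p).card := by
    rcases le_or_gt p.2 p.1 with h | h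
    · rw [ideal_card_le (x := (2 ^ k + p.1, 2 ^ k + p.2)) (by simp; omega) (by simp; omega)
        (by simp; omega), ideal_card_le hp.1 hp.2 h]
      simp
      omega
    · rw [ideal_card_gt (x := (2 ^ k + p.1, 2 ^ k + p.2)) (by simp; omega) (by simp; omega)
        (by simp; omega), ideal_card_gt hp.1 hp.2 h]
      simp
      omega
  unfold idc
  rw [hN]

lemma idc_row {k a b : ℕ} (ha : a < 2 ^ k) (hb : b < 2 ^ k) :
    idc (k + 1) (2 ^ k + a, b) = 2 ^ (k + 1) - (b : ℚ) := by
  have e : (2 : ℕ) ^ (k + 1) = 2 ^ k * 2 := pow_succ 2 k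
  have hN : (ideal (k + 1) Auc (2 ^ k + a, b)).card = 2 ^ (k + 1) - b := by
    rw [ideal_card_le (x := (2 ^ k + a, b)) (by simp; omega) (by simp; omega) (by simp; omega)]
  unfold idc
  rw [hN, Nat.cast_sub (by omega)]
  push_cast
  ring

lemma idc_col {k a b : ℕ} (ha : a < 2 ^ k) (hb : b < 2 ^ k) :
    idc (k + 1) (a, 2 ^ k + b) = 2 ^ (k + 1) - 1 - (a : ℚ) := by
  have e : (2 : ℕ) ^ (k + 1) = 2 ^ k * 2 := pow_succ 2 k
  have hN : (ideal (k + 1) Auc (a, 2 ^ k + b)).card = 2 ^ (k + 1) - (a + 1) := by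
    rw [ideal_card_gt (x := (a, 2 ^ k + b)) (by simp; omega) (by simp; omega) (by simp; omega)]
    omega
  unfold idc
  rw [hN, Nat.cast_sub (by omega)]
  push_cast
  ring
/-! ### The two key sums -/

lemma Tsum : ∀ c i : ℕ, ∑ x ∈ Vk (c + i), 1 / qtile c i x =
    2 ^ (c + i + 1) - 2 ^ c + (c : ℚ) * 2 ^ (c + i) := by
  intro c
  induction c with
  | zero =>
    intro i
    have hsub : ∀ R ∈ BBA 0 i, R ⊆ Vk i := by
      have := BBA_subset 0 i
      simpa using this
    have hspec : ∀ x ∈ Vk i, ∃ R ∈ BBA 0 i, x ∈ R ∧ ∀ R' ∈ BBA 0 i, x ∈ R' → R' = R :=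
      fun x hx => ⟨ideal i Auc x, (spec0 hx).1, (spec0 hx).2.1, (spec0 hx).2.2⟩
    have hLHS : ∑ x ∈ Vk (0 + i), 1 / qtile 0 i x =
        ∑ R ∈ BBA 0 i, (R.card : ℚ) * (1 / (R.card : ℚ)) := by
      rw [Nat.zero_add]
      exact sum_tiles hsub hspec (fun R => 1 / (R.card : ℚ))
    rw [hLHS, Finset.sum_congr rfl (fun R hR => mul_one_div_cancel
      (by exact_mod_cast Finset.card_ne_zero_of_mem ((BBA_zero_nonempty hR).choose_spec))),
      Finset.sum_const, card_BBA_zero, nsmul_eq_mul, mul_one]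
    rw [Nat.cast_sub Nat.one_le_two_pow]
    push_cast
    ring
  | succ c ih =>
    intro i
    have e : c + 1 + i = c + i + 1 := by omega
    rw [e, sum_Vk_succ (c + i) (fun x => 1 / qtile (c + 1) i x)]
    have hpow : (2 : ℕ) ^ (c + i + 1) = 2 ^ (c + i) * 2 := pow_succ 2 (c + i)
    have hA : ∑ x ∈ Vk (c + i), 1 / qtile (c + 1) i x =
        ∑ x ∈ Vk (c + i), 1 / qtile c i x :=
      Finset.sum_congr rfl fun x hx => by
        rw [qtile_ll (mem_Vk.mp hx).1 (mem_Vk.mp hx).2]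
    have hB : ∑ x ∈ Vk (c + i), 1 / qtile (c + 1) i (2 ^ (c + i) + x.1, 2 ^ (c + i) + x.2) =
        ∑ x ∈ Vk (c + i), 1 / qtile c i x :=
      Finset.sum_congr rfl fun x hx => by rw [qtile_tr hx]
    have hC : ∑ x ∈ Vk (c + i), 1 / qtile (c + 1) i (2 ^ (c + i) + x.1, x.2) =
        ∑ _x ∈ Vk (c + i), 1 / ((2 : ℚ) ^ (c + i)) :=
      Finset.sum_congr rfl fun x hx => by
        have h := mem_Vk.mp hx
        rw [qtile_row (by simp) (by simp; omega) (by simp [h.2])]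
    have hD : ∑ x ∈ Vk (c + i), 1 / qtile (c + 1) i (x.1, 2 ^ (c + i) + x.2) =
        ∑ _x ∈ Vk (c + i), 1 / ((2 : ℚ) ^ (c + i)) :=
      Finset.sum_congr rfl fun x hx => by
        have h := mem_Vk.mp hx
        rw [qtile_col (by simp [h.1]) (by simp) (by simp; omega)]
    rw [hA, hB, hC, hD, ih i, Finset.sum_const, card_Vk, nsmul_eq_mul]
    have h2 : ((2 : ℚ)) ^ (c + i) ≠ 0 := by positivity
    push_cast
    field_simp
    ring
lemma rowsum (k : ℕ) : ∑ x ∈ Vk k, ((2 : ℚ) ^ (k + 1) - (x.2 : ℚ)) / 2 ^ k =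
    (3 * 2 ^ k * 2 ^ k + 2 ^ k) / 2 := by
  rw [sum_Vk_snd k (fun b => ((2 : ℚ) ^ (k + 1) - (b : ℚ)) / 2 ^ k), ← Finset.sum_div,
    Finset.sum_sub_distrib, Finset.sum_const, Finset.card_range, nsmul_eq_mul, gaussQ]
  have h2 : ((2 : ℚ)) ^ k ≠ 0 := by positivity
  push_cast
  field_simp
  ring

lemma colsum (k : ℕ) : ∑ x ∈ Vk k, ((2 : ℚ) ^ (k + 1) - 1 - (x.1 : ℚ)) / 2 ^ k =
    (3 * 2 ^ k * 2 ^ k - 2 ^ k) / 2 := by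
  rw [sum_Vk_fst k (fun a => ((2 : ℚ) ^ (k + 1) - 1 - (a : ℚ)) / 2 ^ k), ← Finset.sum_div]
  have e : ∀ a ∈ Finset.range (2 ^ k), ((2 : ℚ) ^ (k + 1) - 1 - (a : ℚ)) =
      ((2 : ℚ) ^ (k + 1) - 1) - (a : ℚ) := fun a _ => by ring
  rw [Finset.sum_congr rfl e, Finset.sum_sub_distrib, Finset.sum_const, Finset.card_range,
    nsmul_eq_mul, gaussQ]
  have h2 : ((2 : ℚ)) ^ k ≠ 0 := by positivity
  push_cast
  field_simp
  ring

lemma Ssum : ∀ c i : ℕ, ∑ x ∈ Vk (c + i), idc (c + i) x / qtile c i x =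
    (((c : ℚ) + 3) * 2 ^ (c + i) * 2 ^ (c + i) + 2 ^ (c + i)
      - 2 ^ c * 2 ^ (c + i) - 2 ^ c * 2 ^ i * 2 ^ i) / 2 := by
  intro c
  induction c with
  | zero =>
    intro i
    simp only [Nat.zero_add]
    rw [Finset.sum_congr rfl (fun x hx => by rw [qtile_zero hx, div_self (idc_pos hx)]),
      Finset.sum_const, card_Vk, nsmul_eq_mul, mul_one]
    push_cast
    ring
  | succ c ih =>
    intro i
    have e : c + 1 + i = c + i + 1 := by omega
    rw [e, sum_Vk_succ (c + i) (fun x => idc (c + i + 1) x / qtile (c + 1) i x)]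
    have hpow : (2 : ℕ) ^ (c + i + 1) = 2 ^ (c + i) * 2 := pow_succ 2 (c + i)
    have hA : ∑ x ∈ Vk (c + i), idc (c + i + 1) x / qtile (c + 1) i x =
        ∑ x ∈ Vk (c + i), (idc (c + i) x / qtile c i x + 2 ^ (c + i) * (1 / qtile c i x)) :=
      Finset.sum_congr rfl fun x hx => by
        rw [idc_succ hx, qtile_ll (mem_Vk.mp hx).1 (mem_Vk.mp hx).2, add_div, mul_one_div]
    have hB : ∑ x ∈ Vk (c + i),
        idc (c + i + 1) (2 ^ (c + i) + x.1, 2 ^ (c + i) + x.2) /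
          qtile (c + 1) i (2 ^ (c + i) + x.1, 2 ^ (c + i) + x.2) =
        ∑ x ∈ Vk (c + i), idc (c + i) x / qtile c i x :=
      Finset.sum_congr rfl fun x hx => by rw [idc_tr hx, qtile_tr hx]
    have hC : ∑ x ∈ Vk (c + i),
        idc (c + i + 1) (2 ^ (c + i) + x.1, x.2) / qtile (c + 1) i (2 ^ (c + i) + x.1, x.2) =
        ∑ x ∈ Vk (c + i), ((2 : ℚ) ^ (c + i + 1) - (x.2 : ℚ)) / 2 ^ (c + i) :=
      Finset.sum_congr rfl fun x hx => by
        have h := mem_Vk.mp hx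
        rw [idc_row h.1 h.2, qtile_row (by simp) (by simp; omega) (by simp [h.2])]
    have hD : ∑ x ∈ Vk (c + i),
        idc (c + i + 1) (x.1, 2 ^ (c + i) + x.2) / qtile (c + 1) i (x.1, 2 ^ (c + i) + x.2) =
        ∑ x ∈ Vk (c + i), ((2 : ℚ) ^ (c + i + 1) - 1 - (x.1 : ℚ)) / 2 ^ (c + i) :=
      Finset.sum_congr rfl fun x hx => by
        have h := mem_Vk.mp hx
        rw [idc_col h.1 h.2, qtile_col (by simp [h.1]) (by simp) (by simp; omega)]
    rw [hA, hB, hC, hD, Finset.sum_add_distrib, ← Finset.mul_sum, ih i, Tsum c i,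
      rowsum (c + i), colsum (c + i)]
    push_cast
    field_simp
    ring
/-- with `k = c + i`, the average-case objective PAR of the
bounded-bisection-auction tiling `T_{c,i}` for `A_k` equals
`(c+3)/2 − 2^c/2^{k+1} + 1/2^{k+1} − 1/2^{c+1}`. -/
theorem stmt9 (c i : ℕ) :
    avgObjPAR (c + i) Auc (BBA c i) =
      ((c : ℚ) + 3) / 2 - 2 ^ c / 2 ^ (c + i + 1) + 1 / 2 ^ (c + i + 1) -
        1 / 2 ^ (c + 1) := by
  unfold avgObjPAR
  have hsum : (∑ x ∈ Vk (c + i),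
      ((ideal (c + i) Auc x).card : ℚ) / ((tileOf (BBA c i) x).card : ℚ)) =
      ∑ x ∈ Vk (c + i), idc (c + i) x / qtile c i x := rfl
  rw [hsum, Ssum c i]
  have hp : (2 : ℚ) ^ (2 * (c + i)) = 2 ^ (c + i) * 2 ^ (c + i) := by
    rw [two_mul, pow_add]
  rw [hp]
  have h1 : ((2 : ℚ)) ^ (c + i) ≠ 0 := by positivity
  have h2 : ((2 : ℚ)) ^ c ≠ 0 := by positivity
  have h3 : ((2 : ℚ)) ^ i ≠ 0 := by positivity
  field_simp
  ring
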